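/- For M > 0 define λ₀(M) := inf over all smooth functions f : ℝ → ℝ with f(−M) = f(M) = 0 and ∫_{−M}^M f(y)² e^{y²/2} dy > 0 of the Rayleigh quotient (∫_{−M}^M f'(y)² e^{y²/2} dy) / (∫_{−M}^M f(y)² e^{y²/2} dy). Then lim_{M→∞} λ₀(M) = 1. (Paper's Lemma 39, combined with the bound λ₀(M) ≥ 1 obtained from Lemma 38.) -/

import Mathlib

open MeasureTheory Real Filter

/-- The bottom Dirichlet eigenvalue on `[−M,M]` of `L̃ = ∂² + y∂`, self-adjoint with
respect to the measure with density `exp(y²/2)`, expressed as the infimum of Rayleigh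
quotients over smooth functions vanishing at `±M`. -/
noncomputable def lambdaZero (M : ℝ) : ℝ :=
  sInf { r : ℝ | ∃ f : ℝ → ℝ, ContDiff ℝ (⊤ : ℕ∞) f ∧ f (-M) = 0 ∧ f M = 0 ∧
    0 < (∫ y in (-M)..M, (f y) ^ 2 * Real.exp (y ^ 2 / 2)) ∧
    r = (∫ y in (-M)..M, (deriv f y) ^ 2 * Real.exp (y ^ 2 / 2))
          / ∫ y in (-M)..M, (f y) ^ 2 * Real.exp (y ^ 2 / 2) }



lemma hasDerivAt_wexp (y : ℝ) :
    HasDerivAt (fun y : ℝ => Real.exp (y ^ 2 / 2)) (y * Real.exp (y ^ 2 / 2)) y := by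
  have h1 : HasDerivAt (fun y : ℝ => y ^ 2 / 2) y y := by
    simpa using (hasDerivAt_pow 2 y).div_const 2
  simpa [mul_comm] using h1.exp

lemma hasDerivAt_gauss (y : ℝ) :
    HasDerivAt (fun y : ℝ => Real.exp (-(y ^ 2 / 2))) (-y * Real.exp (-(y ^ 2 / 2))) y := by
  have h1 : HasDerivAt (fun y : ℝ => -(y ^ 2 / 2)) (-y) y := by
    exact ((hasDerivAt_pow 2 y).div_const 2).neg.congr_deriv (by norm_num)
  simpa [mul_comm] using h1.exp

lemma rayleigh_ge (M : ℝ) (hM : 0 ≤ M) (f : ℝ → ℝ) (hf : ContDiff ℝ (⊤ : ℕ∞) f)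
    (h1 : f (-M) = 0) (h2 : f M = 0) :
    (∫ y in (-M)..M, (f y) ^ 2 * Real.exp (y ^ 2 / 2)) ≤
      ∫ y in (-M)..M, (deriv f y) ^ 2 * Real.exp (y ^ 2 / 2) := by
  have hfc : Continuous f := hf.continuous
  have hfd : Continuous (deriv f) := hf.continuous_deriv (by simp)
  have hfdiff : Differentiable ℝ f := hf.differentiable (by simp)
  set G' : ℝ → ℝ := fun y =>
    (f y ^ 2 + y * (2 * f y * deriv f y)) * Real.exp (y ^ 2 / 2)
      + y * f y ^ 2 * (y * Real.exp (y ^ 2 / 2)) with hG'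
  have hg : ∀ y : ℝ, HasDerivAt (fun y => y * f y ^ 2 * Real.exp (y ^ 2 / 2)) (G' y) y := by
    intro y
    have hfy : HasDerivAt f (deriv f y) y := (hfdiff y).hasDerivAt
    have := ((hasDerivAt_id y).mul (hfy.pow 2)).mul (hasDerivAt_wexp y)
    refine this.congr_deriv ?_
    simp only [hG', id_eq, Pi.mul_apply, Pi.pow_apply]
    ring
  have hG'c : Continuous G' := by fun_prop
  have hFTC : (∫ y in (-M)..M, G' y) = 0 := by
    rw [intervalIntegral.integral_eq_sub_of_hasDerivAt (fun y _ => hg y)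
      (hG'c.intervalIntegrable _ _)]
    simp [h1, h2]
  have hi1 : IntervalIntegrable (fun y => (deriv f y) ^ 2 * Real.exp (y ^ 2 / 2)) volume (-M) M :=
    (by fun_prop : Continuous fun y => (deriv f y) ^ 2 * Real.exp (y ^ 2 / 2)).intervalIntegrable _ _
  have hi2 : IntervalIntegrable (fun y => (f y) ^ 2 * Real.exp (y ^ 2 / 2)) volume (-M) M :=
    (by fun_prop : Continuous fun y => (f y) ^ 2 * Real.exp (y ^ 2 / 2)).intervalIntegrable _ _
  have hi3 : IntervalIntegrable G' volume (-M) M := hG'c.intervalIntegrable _ _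
  have hsplit : (∫ y in (-M)..M, (deriv f y + y * f y) ^ 2 * Real.exp (y ^ 2 / 2))
      = ((∫ y in (-M)..M, (deriv f y) ^ 2 * Real.exp (y ^ 2 / 2))
          - ∫ y in (-M)..M, (f y) ^ 2 * Real.exp (y ^ 2 / 2)) + ∫ y in (-M)..M, G' y := by
    rw [← intervalIntegral.integral_sub hi1 hi2, ← intervalIntegral.integral_add (hi1.sub hi2) hi3]
    apply intervalIntegral.integral_congr
    intro y _
    simp only [hG', Pi.sub_apply, Pi.add_apply]
    ring
  have hpos : 0 ≤ ∫ y in (-M)..M, (deriv f y + y * f y) ^ 2 * Real.exp (y ^ 2 / 2) := by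
    apply intervalIntegral.integral_nonneg (by linarith)
    intro y _
    positivity
  rw [hsplit, hFTC] at hpos
  linarith


noncomputable def testF (M : ℝ) : ℝ → ℝ :=
  fun y => Real.exp (-(y ^ 2 / 2)) - Real.exp (-(M ^ 2 / 2))

noncomputable def II (M : ℝ) : ℝ := ∫ y in (-M)..M, Real.exp (-(y ^ 2 / 2))
noncomputable def JJ (M : ℝ) : ℝ := ∫ y in (-M)..M, Real.exp (y ^ 2 / 2)

lemma testF_contDiff (M : ℝ) : ContDiff ℝ (⊤ : ℕ∞) (testF M) := by
  have h : ContDiff ℝ (⊤ : ℕ∞) fun y : ℝ => -(y ^ 2 / 2) := ((contDiff_id.pow 2).div_const 2).neg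
  exact (Real.contDiff_exp.comp h).sub contDiff_const

lemma deriv_testF (M y : ℝ) : deriv (testF M) y = -y * Real.exp (-(y ^ 2 / 2)) := by
  have : HasDerivAt (testF M) (-y * Real.exp (-(y ^ 2 / 2))) y :=
    (hasDerivAt_gauss y).sub_const _
  exact this.deriv

lemma testF_neg (M : ℝ) : testF M (-M) = 0 := by simp [testF]

lemma testF_pos (M : ℝ) : testF M M = 0 := by simp [testF]

lemma num_eq (M : ℝ) :
    (∫ y in (-M)..M, (deriv (testF M) y) ^ 2 * Real.exp (y ^ 2 / 2))
      = II M - 2 * (M * Real.exp (-(M ^ 2 / 2))) := by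
  have hpt : ∀ y : ℝ, (deriv (testF M) y) ^ 2 * Real.exp (y ^ 2 / 2)
      = y ^ 2 * Real.exp (-(y ^ 2 / 2)) := by
    intro y
    rw [deriv_testF, mul_pow, sq (Real.exp _), ← Real.exp_add, mul_assoc, ← Real.exp_add]
    ring_nf
  have hφ : ∀ y : ℝ, HasDerivAt (fun y : ℝ => -y * Real.exp (-(y ^ 2 / 2)))
      (y ^ 2 * Real.exp (-(y ^ 2 / 2)) - Real.exp (-(y ^ 2 / 2))) y := by
    intro y
    have := ((hasDerivAt_id y).neg.mul (hasDerivAt_gauss y))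
    refine this.congr_deriv ?_
    simp only [id_eq, Pi.neg_apply]
    ring
  have hc1 : Continuous fun y : ℝ => y ^ 2 * Real.exp (-(y ^ 2 / 2)) - Real.exp (-(y ^ 2 / 2)) :=
    by fun_prop
  have hc2 : Continuous fun y : ℝ => Real.exp (-(y ^ 2 / 2)) := by fun_prop
  have hFTC : (∫ y in (-M)..M, (y ^ 2 * Real.exp (-(y ^ 2 / 2)) - Real.exp (-(y ^ 2 / 2))))
      = -2 * (M * Real.exp (-(M ^ 2 / 2))) := by
    rw [intervalIntegral.integral_eq_sub_of_hasDerivAt (fun y _ => hφ y)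
      (hc1.intervalIntegrable _ _)]
    ring_nf
  calc (∫ y in (-M)..M, (deriv (testF M) y) ^ 2 * Real.exp (y ^ 2 / 2))
      = ∫ y in (-M)..M, ((y ^ 2 * Real.exp (-(y ^ 2 / 2)) - Real.exp (-(y ^ 2 / 2)))
          + Real.exp (-(y ^ 2 / 2))) := by
        apply intervalIntegral.integral_congr
        intro y _
        simp only [hpt y]
        ring
    _ = -2 * (M * Real.exp (-(M ^ 2 / 2))) + II M := by
        rw [intervalIntegral.integral_add (hc1.intervalIntegrable _ _)
          (hc2.intervalIntegrable _ _), hFTC]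
        rfl
    _ = II M - 2 * (M * Real.exp (-(M ^ 2 / 2))) := by ring

lemma den_eq (M : ℝ) :
    (∫ y in (-M)..M, (testF M y) ^ 2 * Real.exp (y ^ 2 / 2))
      = II M - 4 * (M * Real.exp (-(M ^ 2 / 2))) + Real.exp (-(M ^ 2 / 2)) ^ 2 * JJ M := by
  set c := Real.exp (-(M ^ 2 / 2)) with hc
  have hpt : ∀ y : ℝ, (testF M y) ^ 2 * Real.exp (y ^ 2 / 2)
      = Real.exp (-(y ^ 2 / 2)) + (-2 * c) + c ^ 2 * Real.exp (y ^ 2 / 2) := by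
    intro y
    have e1 : Real.exp (-(y ^ 2 / 2)) ^ 2 * Real.exp (y ^ 2 / 2) = Real.exp (-(y ^ 2 / 2)) := by
      rw [sq, mul_assoc, ← Real.exp_add, ← Real.exp_add]
      ring_nf
    have e2 : Real.exp (-(y ^ 2 / 2)) * Real.exp (y ^ 2 / 2) = 1 := by
      rw [← Real.exp_add]
      simp
    simp only [testF]
    calc (Real.exp (-(y ^ 2 / 2)) - c) ^ 2 * Real.exp (y ^ 2 / 2)
        = Real.exp (-(y ^ 2 / 2)) ^ 2 * Real.exp (y ^ 2 / 2)
          - 2 * c * (Real.exp (-(y ^ 2 / 2)) * Real.exp (y ^ 2 / 2))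
          + c ^ 2 * Real.exp (y ^ 2 / 2) := by ring
      _ = _ := by rw [e1, e2]; ring
  have hc2 : Continuous fun y : ℝ => Real.exp (-(y ^ 2 / 2)) := by fun_prop
  have hc3 : Continuous fun _ : ℝ => (-2 : ℝ) * c := by fun_prop
  have hc4 : Continuous fun y : ℝ => c ^ 2 * Real.exp (y ^ 2 / 2) := by fun_prop
  calc (∫ y in (-M)..M, (testF M y) ^ 2 * Real.exp (y ^ 2 / 2))
      = ∫ y in (-M)..M, (Real.exp (-(y ^ 2 / 2)) + (-2 * c) + c ^ 2 * Real.exp (y ^ 2 / 2)) := by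
        apply intervalIntegral.integral_congr
        intro y _
        exact hpt y
    _ = II M - 4 * (M * c) + c ^ 2 * JJ M := by
        rw [intervalIntegral.integral_add ((by fun_prop : Continuous fun y : ℝ => Real.exp (-(y ^ 2 / 2)) + -2 * c).intervalIntegrable _ _)
          (hc4.intervalIntegrable _ _),
          intervalIntegral.integral_add (hc2.intervalIntegrable _ _) (hc3.intervalIntegrable _ _),
          intervalIntegral.integral_const_mul, intervalIntegral.integral_const_mul,
          intervalIntegral.integral_const]
        simp only [II, JJ, smul_eq_mul]
        ring

noncomputable def KK : ℝ := ∫ y : ℝ, Real.exp (-(1 / 2) * y ^ 2)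

lemma KK_pos : 0 < KK := by
  rw [KK, integral_gaussian]
  positivity

lemma gauss_fun_eq : (fun y : ℝ => Real.exp (-(y ^ 2 / 2))) =
    fun y : ℝ => Real.exp (-(1 / 2) * y ^ 2) := by
  funext y; ring_nf

lemma tendsto_II : Tendsto II atTop (nhds KK) := by
  have hint : Integrable (fun y : ℝ => Real.exp (-(1 / 2) * y ^ 2)) :=
    integrable_exp_neg_mul_sq (by norm_num)
  have h := intervalIntegral_tendsto_integral hint
    (tendsto_neg_atTop_atBot) tendsto_id
  have h2 : ∀ M : ℝ, II M = ∫ y in (-M)..M, Real.exp (-(1 / 2) * y ^ 2) := fun M => by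
    rw [II, gauss_fun_eq]
  have h3 : II = fun M : ℝ => ∫ y in (-M)..M, Real.exp (-(1 / 2) * y ^ 2) := funext h2
  rw [h3, KK]
  simpa using h

lemma tendsto_Mc : Tendsto (fun M : ℝ => M * Real.exp (-(M ^ 2 / 2))) atTop (nhds 0) := by
  apply squeeze_zero' (g := fun M : ℝ => M * Real.exp (-M))
  · filter_upwards [eventually_ge_atTop (0 : ℝ)] with M hM
    positivity
  · filter_upwards [eventually_ge_atTop (2 : ℝ)] with M hM
    have h1 : -(M ^ 2 / 2) ≤ -M := by nlinarith
    exact mul_le_mul_of_nonneg_left (Real.exp_le_exp.2 h1) (by linarith)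
  · simpa [pow_one] using tendsto_pow_mul_exp_neg_atTop_nhds_zero 1

lemma tendsto_c2J :
    Tendsto (fun M : ℝ => Real.exp (-(M ^ 2 / 2)) ^ 2 * JJ M) atTop (nhds 0) := by
  apply squeeze_zero' (g := fun M : ℝ => 2 * (M * Real.exp (-(M ^ 2 / 2))))
  · filter_upwards [eventually_ge_atTop (0 : ℝ)] with M hM
    have hJ : 0 ≤ JJ M := by
      apply intervalIntegral.integral_nonneg (by linarith)
      intro y _
      positivity
    positivity
  · filter_upwards [eventually_ge_atTop (0 : ℝ)] with M hM
    have hJle : JJ M ≤ 2 * M * Real.exp (M ^ 2 / 2) := by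
      have hmono : JJ M ≤ ∫ _ in (-M)..M, Real.exp (M ^ 2 / 2) := by
        apply intervalIntegral.integral_mono_on (by linarith)
          ((by fun_prop : Continuous fun y : ℝ => Real.exp (y ^ 2 / 2)).intervalIntegrable _ _)
          (intervalIntegrable_const)
        intro y hy
        apply Real.exp_le_exp.2
        have := sq_le_sq' hy.1 hy.2
        linarith
      rw [intervalIntegral.integral_const, smul_eq_mul] at hmono
      calc JJ M ≤ (M - -M) * Real.exp (M ^ 2 / 2) := hmono
        _ = 2 * M * Real.exp (M ^ 2 / 2) := by ring
    have key : Real.exp (-(M ^ 2 / 2)) ^ 2 * Real.exp (M ^ 2 / 2) = Real.exp (-(M ^ 2 / 2)) := by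
      rw [sq, mul_assoc, ← Real.exp_add, ← Real.exp_add]
      ring_nf
    calc Real.exp (-(M ^ 2 / 2)) ^ 2 * JJ M
        ≤ Real.exp (-(M ^ 2 / 2)) ^ 2 * (2 * M * Real.exp (M ^ 2 / 2)) := by
          apply mul_le_mul_of_nonneg_left hJle (by positivity)
      _ = 2 * (M * (Real.exp (-(M ^ 2 / 2)) ^ 2 * Real.exp (M ^ 2 / 2))) := by ring
      _ = 2 * (M * Real.exp (-(M ^ 2 / 2))) := by rw [key]
  · simpa using tendsto_Mc.const_mul 2

lemma tendsto_num : Tendsto (fun M : ℝ => II M - 2 * (M * Real.exp (-(M ^ 2 / 2))))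
    atTop (nhds KK) := by
  simpa using tendsto_II.sub (tendsto_Mc.const_mul 2)

lemma tendsto_den : Tendsto (fun M : ℝ => II M - 4 * (M * Real.exp (-(M ^ 2 / 2)))
    + Real.exp (-(M ^ 2 / 2)) ^ 2 * JJ M) atTop (nhds KK) := by
  simpa using (tendsto_II.sub (tendsto_Mc.const_mul 4)).add tendsto_c2J


/-- Lemma 39 together with the bound from Lemma 38:
`lim_{M→∞} λ₀(M) = 1`. -/
theorem lambdaZero_tendsto_one :
    Tendsto lambdaZero atTop (nhds 1) := by
  have hN : Tendsto (fun M : ℝ => ∫ y in (-M)..M, (deriv (testF M) y) ^ 2 * Real.exp (y ^ 2 / 2))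
      atTop (nhds KK) := by
    simp only [num_eq]
    exact tendsto_num
  have hD : Tendsto (fun M : ℝ => ∫ y in (-M)..M, (testF M y) ^ 2 * Real.exp (y ^ 2 / 2))
      atTop (nhds KK) := by
    simp only [den_eq]
    exact tendsto_den
  have hDpos : ∀ᶠ M : ℝ in atTop,
      0 < ∫ y in (-M)..M, (testF M y) ^ 2 * Real.exp (y ^ 2 / 2) :=
    hD.eventually (eventually_gt_nhds KK_pos)
  have hR : Tendsto (fun M : ℝ =>
      (∫ y in (-M)..M, (deriv (testF M) y) ^ 2 * Real.exp (y ^ 2 / 2))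
        / ∫ y in (-M)..M, (testF M y) ^ 2 * Real.exp (y ^ 2 / 2)) atTop (nhds 1) := by
    have := hN.div hD KK_pos.ne'
    rwa [div_self KK_pos.ne'] at this
  apply tendsto_of_tendsto_of_tendsto_of_le_of_le' tendsto_const_nhds hR
  · filter_upwards [eventually_ge_atTop (0 : ℝ), hDpos] with M hM0 hMpos
    rw [lambdaZero]
    refine le_csInf ⟨_, testF M, testF_contDiff M, testF_neg M, testF_pos M, hMpos, rfl⟩ ?_
    rintro r ⟨f, hf, hf1, hf2, hfpos, rfl⟩
    exact (one_le_div hfpos).2 (rayleigh_ge M hM0 f hf hf1 hf2)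
  · filter_upwards [eventually_ge_atTop (0 : ℝ), hDpos] with M hM0 hMpos
    rw [lambdaZero]
    apply csInf_le
    · refine ⟨1, ?_⟩
      rintro r ⟨f, hf, hf1, hf2, hfpos, rfl⟩
      exact (one_le_div hfpos).2 (rayleigh_ge M hM0 f hf hf1 hf2)
    · exact ⟨testF M, testF_contDiff M, testF_neg M, testF_pos M, hMpos, rfl⟩
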